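/- arXiv:2503.19173 — 2 statements merged into one kernel-verified Lean document; each statement's English description precedes it below -/
import Mathlib

section
/- Let v, w be vertices of a graph at shortest-path (hop) distance j. Consider L layers of a message-passing GNN in which only k of the first ℓ layers are message-passing (i.e., have f^agg depending on neighbor features), with k < j; in non-message-passing (stationary) layers each node's update depends only on its own feature and adjacent edge weights. Then the feature h_v^(ℓ) is independent of the initial feature x_w: changing x_w leaves h_v^(ℓ) unchanged. -/
/-- A GNN with per-layer functions, where layer `ℓ+1` is message passing when `mp ℓ = true`
(aggregating neighboring features), and otherwise stationary: the new feature depends only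
on the node's own previous feature and the weights of its incident edges. -/
noncomputable def gnnRun {V : Type*} [Fintype V] [DecidableEq V]
    (G : SimpleGraph V) [DecidableRel G.Adj]
    (xe : V → V → ℝ) (mp : ℕ → Bool)
    (fagg : ℕ → ℝ → ℝ → ℝ) (fup : ℕ → ℝ → ℝ → ℝ) (fstat : ℕ → ℝ → Finset ℝ → ℝ)
    (x : V → ℝ) : ℕ → V → ℝ
  | 0 => x
  | (ℓ + 1) => fun v =>
      if mp ℓ then
        fup ℓ ((insert v (G.neighborFinset v)).inf' (Finset.insert_nonempty _ _)
              (fun u => fagg ℓ (gnnRun G xe mp fagg fup fstat x ℓ u) (xe u v)))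
          (gnnRun G xe mp fagg fup fstat x ℓ v)
      else
        fstat ℓ (gnnRun G xe mp fagg fup fstat x ℓ v)
          ((insert v (G.neighborFinset v)).image (fun u => xe u v))

private lemma gnn_aux {V : Type*} [Fintype V] [DecidableEq V]
    (G : SimpleGraph V) [DecidableRel G.Adj]
    (xe : V → V → ℝ) (mp : ℕ → Bool)
    (fagg : ℕ → ℝ → ℝ → ℝ) (fup : ℕ → ℝ → ℝ → ℝ) (fstat : ℕ → ℝ → Finset ℝ → ℝ)
    (w : V) (x x' : V → ℝ) (hagree : ∀ z : V, z ≠ w → x z = x' z) :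
    ∀ (ℓ : ℕ) (v : V),
      ((Finset.range ℓ).filter (fun i => mp i = true)).card < G.dist v w →
      gnnRun G xe mp fagg fup fstat x ℓ v = gnnRun G xe mp fagg fup fstat x' ℓ v := by
  intro ℓ
  induction ℓ with
  | zero =>
    intro v hv
    simp only [Finset.range_zero, Finset.filter_empty, Finset.card_empty] at hv
    have hne : v ≠ w := by
      rintro rfl; simp [SimpleGraph.dist_self] at hv
    exact hagree v hne
  | succ ℓ ih =>
    intro v hv
    have hsplit : (Finset.range (ℓ+1)).filter (fun i => mp i = true)
        = if mp ℓ = true then insert ℓ ((Finset.range ℓ).filter (fun i => mp i = true))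
          else (Finset.range ℓ).filter (fun i => mp i = true) := by
      rw [Finset.range_add_one, Finset.filter_insert]
    show (if mp ℓ then _ else _) = (if mp ℓ then _ else _)
    by_cases hmp : mp ℓ = true
    · rw [hsplit, if_pos hmp] at hv
      have hnotmem : ℓ ∉ (Finset.range ℓ).filter (fun i => mp i = true) := by simp
      rw [Finset.card_insert_of_notMem hnotmem] at hv
      -- so card + 1 < dist v w
      have hreach : G.Reachable v w := by
        apply SimpleGraph.Reachable.of_dist_ne_zero
        omega
      have key : ∀ u ∈ insert v (G.neighborFinset v),
          gnnRun G xe mp fagg fup fstat x ℓ u = gnnRun G xe mp fagg fup fstat x' ℓ u := by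
        intro u hu
        rcases Finset.mem_insert.mp hu with rfl | hadj
        · exact ih u (by omega)
        · rw [SimpleGraph.mem_neighborFinset] at hadj
          apply ih
          -- dist v w ≤ dist u w + 1
          have hur : G.Reachable u w := (hadj.reachable).symm.trans hreach
          obtain ⟨p, hp⟩ := hur.exists_walk_length_eq_dist
          have := G.dist_le (SimpleGraph.Walk.cons hadj p)
          simp only [SimpleGraph.Walk.length_cons, hp] at this
          omega
      rw [if_pos hmp, if_pos hmp]
      have h1 : (insert v (G.neighborFinset v)).inf' (Finset.insert_nonempty _ _)
            (fun u => fagg ℓ (gnnRun G xe mp fagg fup fstat x ℓ u) (xe u v))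
          = (insert v (G.neighborFinset v)).inf' (Finset.insert_nonempty _ _)
            (fun u => fagg ℓ (gnnRun G xe mp fagg fup fstat x' ℓ u) (xe u v)) := by
        apply Finset.inf'_congr _ rfl
        intro u hu
        rw [key u hu]
      rw [h1, key v (Finset.mem_insert_self _ _)]
    · rw [hsplit, if_neg hmp] at hv
      rw [ih v hv, if_neg hmp, if_neg hmp]

theorem stmt_10 {V : Type*} [Fintype V] [DecidableEq V]
    (G : SimpleGraph V) [DecidableRel G.Adj]
    (xe : V → V → ℝ) (mp : ℕ → Bool)
    (fagg : ℕ → ℝ → ℝ → ℝ) (fup : ℕ → ℝ → ℝ → ℝ) (fstat : ℕ → ℝ → Finset ℝ → ℝ)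
    (v w : V) (ℓ : ℕ)
    (hk : ((Finset.range ℓ).filter (fun i => mp i = true)).card < G.dist v w)
    (x x' : V → ℝ) (hagree : ∀ z : V, z ≠ w → x z = x' z) :
    gnnRun G xe mp fagg fup fstat x ℓ v = gnnRun G xe mp fagg fup fstat x' ℓ v :=
  gnn_aux G xe mp fagg fup fstat w x x' hagree ℓ v hk
end

section
/- Let σ be ReLU. If for three distinct positive reals a_1 < a_2 < a_3 and real parameters w2, W12, b1, b2 and for each i ∈ {1,2,3} we have a_i = σ(w2·σ(W12·a_i + b1) + b2), and |a_i - a_j| > 0 for i ≠ j, then there exist at least two indices i with W12·a_i + b1 > 0, and for any such pair the linear relations force w2·W12 = 1 and w2·b1 + b2 = 0. -/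
lemma stmt_16_aux (x y w2 W12 b1 b2 : ℝ) (hxy : x ≠ y)
    (hx : x = w2 * (W12 * x + b1) + b2) (hy : y = w2 * (W12 * y + b1) + b2) :
    w2 * W12 = 1 ∧ w2 * b1 + b2 = 0 := by
  have h : (w2 * W12 - 1) * (x - y) = 0 := by linear_combination hy - hx
  have h1 : w2 * W12 = 1 := by
    rcases mul_eq_zero.mp h with h' | h'
    · linarith
    · exact absurd (sub_eq_zero.mp h') hxy
  refine ⟨h1, ?_⟩
  linear_combination -hx - x * h1

theorem stmt_16 (a : Fin 3 → ℝ) (hmono : StrictMono a) (hpos : 0 < a 0)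
    (w2 W12 b1 b2 : ℝ)
    (hfix : ∀ i : Fin 3, a i = max (w2 * max (W12 * a i + b1) 0 + b2) 0) :
    (∃ i j : Fin 3, i ≠ j ∧ 0 < W12 * a i + b1 ∧ 0 < W12 * a j + b1) ∧
      w2 * W12 = 1 ∧ w2 * b1 + b2 = 0 := by
  have hapos : ∀ i : Fin 3, 0 < a i := fun i =>
    lt_of_lt_of_le hpos (hmono.monotone (Fin.zero_le i))
  have hlin : ∀ i : Fin 3, a i = w2 * max (W12 * a i + b1) 0 + b2 := by
    intro i
    have h := hfix i
    have hi := hapos i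
    rcases le_or_gt (w2 * max (W12 * a i + b1) 0 + b2) 0 with hle | hlt
    · rw [max_eq_right hle] at h; linarith
    · rw [max_eq_left hlt.le] at h; exact h
  have hflat : ∀ i : Fin 3, ¬ (0 < W12 * a i + b1) → a i = b2 := by
    intro i hi
    have h := hlin i
    rw [max_eq_right (not_lt.mp hi)] at h
    simpa using h
  have hne : ∀ i j : Fin 3, i ≠ j → a i ≠ a j := fun i j hij => hmono.injective.ne hij
  have hP : ∀ i j : Fin 3, i ≠ j → (0 < W12 * a i + b1) ∨ (0 < W12 * a j + b1) := by
    intro i j hij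
    by_contra hc
    push_neg at hc
    exact hne i j hij ((hflat i (not_lt.mpr hc.1)).trans (hflat j (not_lt.mpr hc.2)).symm)
  have hact : ∀ i : Fin 3, 0 < W12 * a i + b1 → a i = w2 * (W12 * a i + b1) + b2 := by
    intro i hi
    have h := hlin i
    rwa [max_eq_left hi.le] at h
  have key : ∀ i j : Fin 3, i ≠ j → 0 < W12 * a i + b1 → 0 < W12 * a j + b1 →
      (∃ i j : Fin 3, i ≠ j ∧ 0 < W12 * a i + b1 ∧ 0 < W12 * a j + b1) ∧
      w2 * W12 = 1 ∧ w2 * b1 + b2 = 0 := by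
    intro i j hij hi hj
    exact ⟨⟨i, j, hij, hi, hj⟩, stmt_16_aux (a i) (a j) w2 W12 b1 b2 (hne i j hij)
      (hact i hi) (hact j hj)⟩
  by_cases h0 : 0 < W12 * a 0 + b1
  · by_cases h1 : 0 < W12 * a 1 + b1
    · exact key 0 1 (by decide) h0 h1
    · have h2 := (hP 1 2 (by decide)).resolve_left h1
      exact key 0 2 (by decide) h0 h2
  · have h1 := (hP 0 1 (by decide)).resolve_left h0
    have h2 := (hP 0 2 (by decide)).resolve_left h0
    exact key 1 2 (by decide) h1 h2
end
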